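/- arXiv:1409.4166 — 3 statements merged into one kernel-verified Lean document; each statement's English description precedes it below -/
import Mathlib

section
/- Let X, Y be complex vector spaces and S : X → Y, T : Y → X linear maps. Since S(im(T∘S)) ⊆ im(S∘T) and T(im(S∘T)) ⊆ im(T∘S), the maps S and T induce linear maps S̄ : X/im(T∘S) → Y/im(S∘T) and T̄ : Y/im(S∘T) → X/im(T∘S), which satisfy T̄∘S̄ = 0 and S̄∘T̄ = 0. If (S, T) is a Fredholm pair, then (S̄, T̄) is also a Fredholm pair and ind(S̄, T̄) = ind(S, T). -/
open LinearMap Module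

/-- The quotient `ker S / (ker S ∩ im T)` appearing in the definition of a Fredholm pair. -/
abbrev fredholmKerQuot {X Y : Type*} [AddCommGroup X] [Module ℂ X]
    [AddCommGroup Y] [Module ℂ Y] (S : X →ₗ[ℂ] Y) (T : Y →ₗ[ℂ] X) :=
  (LinearMap.ker S) ⧸ (Submodule.comap (LinearMap.ker S).subtype (LinearMap.range T))

/-- `(S, T)` is a Fredholm pair if `ker S / (ker S ∩ im T)` and `ker T / (ker T ∩ im S)`
are both finite dimensional. -/
def IsFredholmPair {X Y : Type*} [AddCommGroup X] [Module ℂ X]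
    [AddCommGroup Y] [Module ℂ Y] (S : X →ₗ[ℂ] Y) (T : Y →ₗ[ℂ] X) : Prop :=
  FiniteDimensional ℂ (fredholmKerQuot S T) ∧ FiniteDimensional ℂ (fredholmKerQuot T S)

/-- The index of a Fredholm pair:
`ind(S,T) = dim (ker S / (ker S ∩ im T)) - dim (ker T / (ker T ∩ im S))`. -/
noncomputable def fredholmIndex {X Y : Type*} [AddCommGroup X] [Module ℂ X]
    [AddCommGroup Y] [Module ℂ Y] (S : X →ₗ[ℂ] Y) (T : Y →ₗ[ℂ] X) : ℤ :=
  (Module.finrank ℂ (fredholmKerQuot S T) : ℤ) - (Module.finrank ℂ (fredholmKerQuot T S) : ℤ)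

/-! The map `x ↦ [x]` from `ker S` to `ker S̄ / (ker S̄ ∩ im T̄)` is onto: if `S x = S T y`, the
class `[x]` is congruent modulo `im T̄` to `[x - T y]` with `x - T y ∈ ker S`. Its kernel is
`ker S ∩ im T`, because `x - T y ∈ im (T S)` already forces `x ∈ im T`. Hence the two defect
spaces of `(S̄, T̄)` are isomorphic to those of `(S, T)`, and finiteness and index carry over. -/

namespace LinearMap

theorem map_range_comp_le_range_comp {R X Y : Type*} [Semiring R]
    [AddCommMonoid X] [Module R X] [AddCommMonoid Y] [Module R Y]
    (S : X →ₗ[R] Y) (T : Y →ₗ[R] X) : (range (T ∘ₗ S)).map S ≤ range (S ∘ₗ T) :=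
  (range_comp (T ∘ₗ S) S).symm.trans_le (range_comp_le_range S (S ∘ₗ T))

section InducedOnQuotient

variable {R X Y : Type*} [Ring R] [AddCommGroup X] [Module R X] [AddCommGroup Y] [Module R Y]
  {S : X →ₗ[R] Y} {T : Y →ₗ[R] X}
  {Sbar : (X ⧸ range (T ∘ₗ S)) →ₗ[R] (Y ⧸ range (S ∘ₗ T))}
  {Tbar : (Y ⧸ range (S ∘ₗ T)) →ₗ[R] (X ⧸ range (T ∘ₗ S))}

theorem comp_eq_zero_of_mk
    (hSbar : ∀ x, Sbar (Submodule.Quotient.mk x) = Submodule.Quotient.mk (S x))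
    (hTbar : ∀ y, Tbar (Submodule.Quotient.mk y) = Submodule.Quotient.mk (T y)) :
    Tbar ∘ₗ Sbar = 0 := by
  ext x
  simp only [comp_apply, Submodule.mkQ_apply, zero_apply, hSbar, hTbar,
    Submodule.Quotient.mk_eq_zero]
  exact mem_range_self (T ∘ₗ S) x

theorem mk_mem_range_iff
    (hTbar : ∀ y, Tbar (Submodule.Quotient.mk y) = Submodule.Quotient.mk (T y)) (x : X) :
    (Submodule.Quotient.mk x : X ⧸ range (T ∘ₗ S)) ∈ range Tbar ↔ x ∈ range T := by
  constructor
  · rintro ⟨q, hq⟩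
    obtain ⟨y, rfl⟩ := Submodule.Quotient.mk_surjective _ q
    rw [hTbar, Submodule.Quotient.eq] at hq
    obtain ⟨z, hz⟩ := hq
    exact ⟨y - S z, by rw [map_sub, ← comp_apply, hz, sub_sub_cancel]⟩
  · rintro ⟨y, rfl⟩
    exact ⟨Submodule.Quotient.mk y, hTbar y⟩

theorem mk_mem_ker_of_mem_ker
    (hSbar : ∀ x, Sbar (Submodule.Quotient.mk x) = Submodule.Quotient.mk (S x))
    {x : X} (hx : x ∈ ker S) : (Submodule.Quotient.mk x : X ⧸ range (T ∘ₗ S)) ∈ ker Sbar := by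
  rw [mem_ker, hSbar, mem_ker.mp hx, Submodule.Quotient.mk_zero]

theorem exists_mem_ker_mk_sub_mem_range
    (hSbar : ∀ x, Sbar (Submodule.Quotient.mk x) = Submodule.Quotient.mk (S x))
    (hTbar : ∀ y, Tbar (Submodule.Quotient.mk y) = Submodule.Quotient.mk (T y))
    {q : X ⧸ range (T ∘ₗ S)} (hq : q ∈ ker Sbar) :
    ∃ x ∈ ker S, Submodule.Quotient.mk x - q ∈ range Tbar := by
  obtain ⟨x, rfl⟩ := Submodule.Quotient.mk_surjective _ q
  rw [mem_ker, hSbar, Submodule.Quotient.mk_eq_zero] at hq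
  obtain ⟨y, hy⟩ := hq
  refine ⟨x - T y, by rw [mem_ker, map_sub, ← comp_apply, hy, sub_self],
    Submodule.Quotient.mk (-y), ?_⟩
  rw [hTbar, ← Submodule.Quotient.mk_sub, sub_sub_cancel_left, map_neg]

/-- Induced by `x ↦ [x] : ker S → ker S̄`. -/
noncomputable def kerQuotEquivOfMk
    (hSbar : ∀ x, Sbar (Submodule.Quotient.mk x) = Submodule.Quotient.mk (S x))
    (hTbar : ∀ y, Tbar (Submodule.Quotient.mk y) = Submodule.Quotient.mk (T y)) :
    (ker S ⧸ (range T).comap (ker S).subtype) ≃ₗ[R]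
      (ker Sbar ⧸ (range Tbar).comap (ker Sbar).subtype) :=
  let φ := ((range Tbar).comap (ker Sbar).subtype).mkQ ∘ₗ
    ((range (T ∘ₗ S)).mkQ ∘ₗ (ker S).subtype).codRestrict (ker Sbar)
      fun x ↦ mk_mem_ker_of_mem_ker hSbar x.2
  have hker : ker φ = (range T).comap (ker S).subtype := by
    ext x
    simp only [φ, mem_ker, comp_apply, Submodule.mkQ_apply, Submodule.Quotient.mk_eq_zero,
      Submodule.mem_comap, Submodule.subtype_apply]
    exact mk_mem_range_iff hTbar x
  have hsurj : Function.Surjective φ := by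
    intro q
    obtain ⟨k, rfl⟩ := Submodule.mkQ_surjective _ q
    obtain ⟨x, hx, hxk⟩ := exists_mem_ker_mk_sub_mem_range hSbar hTbar k.2
    exact ⟨⟨x, hx⟩, (Submodule.Quotient.eq _).2 hxk⟩
  (Submodule.quotEquivOfEq _ _ hker.symm).trans (φ.quotKerEquivOfSurjective hsurj)

end InducedOnQuotient

end LinearMap

/-- `S` and `T` map `im(T∘S)` into `im(S∘T)` and `im(S∘T)` into `im(T∘S)`
respectively, the induced maps `S̄ : X/im(T∘S) → Y/im(S∘T)` and `T̄ : Y/im(S∘T) → X/im(T∘S)`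
satisfy `T̄∘S̄ = 0` and `S̄∘T̄ = 0`, and if `(S,T)` is a Fredholm pair then so is `(S̄,T̄)`,
with the same index. -/
theorem fredholmPair_quotient_by_image {X Y : Type*} [AddCommGroup X] [Module ℂ X]
    [AddCommGroup Y] [Module ℂ Y] (S : X →ₗ[ℂ] Y) (T : Y →ₗ[ℂ] X)
    (Sbar : (X ⧸ LinearMap.range (T ∘ₗ S)) →ₗ[ℂ] (Y ⧸ LinearMap.range (S ∘ₗ T)))
    (Tbar : (Y ⧸ LinearMap.range (S ∘ₗ T)) →ₗ[ℂ] (X ⧸ LinearMap.range (T ∘ₗ S)))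
    (hSbar : ∀ x : X, Sbar (Submodule.Quotient.mk x) = Submodule.Quotient.mk (S x))
    (hTbar : ∀ y : Y, Tbar (Submodule.Quotient.mk y) = Submodule.Quotient.mk (T y)) :
    (Submodule.map S (LinearMap.range (T ∘ₗ S)) ≤ LinearMap.range (S ∘ₗ T)) ∧
    (Submodule.map T (LinearMap.range (S ∘ₗ T)) ≤ LinearMap.range (T ∘ₗ S)) ∧
    Tbar ∘ₗ Sbar = 0 ∧ Sbar ∘ₗ Tbar = 0 ∧
    (IsFredholmPair S T →
      IsFredholmPair Sbar Tbar ∧ fredholmIndex Sbar Tbar = fredholmIndex S T) := by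
  refine ⟨map_range_comp_le_range_comp S T, map_range_comp_le_range_comp T S,
    comp_eq_zero_of_mk hSbar hTbar, comp_eq_zero_of_mk hTbar hSbar, ?_⟩
  rintro ⟨hST, hTS⟩
  let e₁ := kerQuotEquivOfMk hSbar hTbar
  let e₂ := kerQuotEquivOfMk hTbar hSbar
  refine ⟨⟨Module.Finite.equiv e₁, Module.Finite.equiv e₂⟩, ?_⟩
  rw [fredholmIndex, fredholmIndex, e₁.finrank_eq, e₂.finrank_eq]
end

section
/- Let X, Y be complex vector spaces and S : X → Y, T : Y → X linear maps such that (S, T) is a Fredholm pair. If in addition the quotient spaces X/im(T∘S) and Y/im(S∘T) are finite-dimensional, then ind(S, T) = dim(X/im(T∘S)) − dim(Y/im(S∘T)). -/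
open LinearMap Module

/-!
Induced by the inclusion of `ker T`, by `T` and by the identity of `X`, there is an exact sequence
`0 → ker T / (ker T ∩ im S) → Y / im S → X / im (T ∘ S) → X / im T → 0`;
exactness at `Y / im S` is the identity `T⁻¹ (im (T ∘ S)) = im S + ker T`.
Hence `Y / im S` is finite dimensional and
`dim (ker T / (ker T ∩ im S)) + dim (X / im (T ∘ S)) = dim (Y / im S) + dim (X / im T)`.
The right-hand side is symmetric under exchanging `S` and `T`, so subtracting the two instances
of this identity gives the index formula.
-/

open Function Submodule

section ExactSequence

variable {K A B C D : Type*} [DivisionRing K]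
  [AddCommGroup A] [Module K A] [AddCommGroup B] [Module K B]
  [AddCommGroup C] [Module K C] [AddCommGroup D] [Module K D]
  {f : A →ₗ[K] B} {g : B →ₗ[K] C} {h : C →ₗ[K] D}

theorem FiniteDimensional.of_exact [FiniteDimensional K A] [FiniteDimensional K C]
    (hfg : Exact f g) : FiniteDimensional K B :=
  have hfg' : Exact f g.rangeRestrict := by rwa [exact_iff, ker_rangeRestrict, ← exact_iff]
  Module.Finite.of_exact hfg' g.surjective_rangeRestrict

theorem finrank_add_finrank_eq_of_exact_four [FiniteDimensional K B] [FiniteDimensional K C]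
    (hf : Injective f) (hfg : Exact f g) (hgh : Exact g h) (hh : Surjective h) :
    finrank K A + finrank K C = finrank K B + finrank K D := by
  have hB := g.finrank_range_add_finrank_ker
  have hC := h.finrank_range_add_finrank_ker
  rw [hfg.linearMap_ker_eq, finrank_range_of_inj hf] at hB
  rw [hgh.linearMap_ker_eq, range_eq_top.mpr hh, finrank_top] at hC
  omega

end ExactSequence

section QuotientSequence

variable {R X Y : Type*} [Ring R]
  [AddCommGroup X] [Module R X] [AddCommGroup Y] [Module R Y]

theorem Submodule.injective_mapQ_comap_subtype (p q : Submodule R Y) :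
    Injective (mapQ (q.comap p.subtype) q p.subtype le_rfl) := by
  rw [← ker_eq_bot, ker_mapQ, mkQ_map_self]

variable (S : X →ₗ[R] Y) (T : Y →ₗ[R] X)

theorem LinearMap.range_le_comap_range_comp : range S ≤ (range (T ∘ₗ S)).comap T := by
  rw [← map_le_iff_le_comap, range_comp]

theorem LinearMap.exact_mapQ_subtype_mapQ :
    Exact (mapQ ((range S).comap (ker T).subtype) (range S) (ker T).subtype le_rfl)
      (mapQ (range S) (range (T ∘ₗ S)) T (range_le_comap_range_comp S T)) := by
  rw [exact_iff, ker_mapQ, range_mapQ, range_comp, comap_map_eq, range_subtype, Submodule.map_sup,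
    mkQ_map_self, bot_sup_eq]

theorem LinearMap.exact_mapQ_factor :
    Exact (mapQ (range S) (range (T ∘ₗ S)) T (range_le_comap_range_comp S T))
      (factor (range_comp_le_range S T)) := by
  rw [exact_iff, factor, ker_mapQ, range_mapQ, comap_id]

end QuotientSequence

section QuotientRanks

variable {K X Y : Type*} [DivisionRing K]
  [AddCommGroup X] [Module K X] [AddCommGroup Y] [Module K Y] (S : X →ₗ[K] Y) (T : Y →ₗ[K] X)

theorem LinearMap.finiteDimensional_quotient_range_of_comp
    [FiniteDimensional K (ker T ⧸ (range S).comap (ker T).subtype)]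
    [FiniteDimensional K (X ⧸ range (T ∘ₗ S))] : FiniteDimensional K (Y ⧸ range S) :=
  .of_exact (exact_mapQ_subtype_mapQ S T)

theorem LinearMap.finrank_ker_quotient_add_finrank_quotient_range_comp
    [FiniteDimensional K (Y ⧸ range S)] [FiniteDimensional K (X ⧸ range (T ∘ₗ S))] :
    finrank K (ker T ⧸ (range S).comap (ker T).subtype) + finrank K (X ⧸ range (T ∘ₗ S)) =
      finrank K (Y ⧸ range S) + finrank K (X ⧸ range T) :=
  finrank_add_finrank_eq_of_exact_four (injective_mapQ_comap_subtype _ _)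
    (exact_mapQ_subtype_mapQ S T) (exact_mapQ_factor S T) (factor_surjective _)

end QuotientRanks

/-- if `(S,T)` is a Fredholm pair and the quotients `X/im(T∘S)` and
`Y/im(S∘T)` are finite dimensional, then
`ind(S,T) = dim (X/im(T∘S)) - dim (Y/im(S∘T))`. -/
theorem fredholmIndex_eq_of_finiteDimensional_quotients {X Y : Type*}
    [AddCommGroup X] [Module ℂ X] [AddCommGroup Y] [Module ℂ Y]
    (S : X →ₗ[ℂ] Y) (T : Y →ₗ[ℂ] X) (hFred : IsFredholmPair S T)
    (hX : FiniteDimensional ℂ (X ⧸ LinearMap.range (T ∘ₗ S)))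
    (hY : FiniteDimensional ℂ (Y ⧸ LinearMap.range (S ∘ₗ T))) :
    fredholmIndex S T =
      (Module.finrank ℂ (X ⧸ LinearMap.range (T ∘ₗ S)) : ℤ) -
        (Module.finrank ℂ (Y ⧸ LinearMap.range (S ∘ₗ T)) : ℤ) := by
  obtain ⟨hS, hT⟩ := hFred
  have := finiteDimensional_quotient_range_of_comp S T
  have := finiteDimensional_quotient_range_of_comp T S
  have hTS := finrank_ker_quotient_add_finrank_quotient_range_comp S T
  have hST := finrank_ker_quotient_add_finrank_quotient_range_comp T S
  unfold fredholmIndex fredholmKerQuot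
  omega
end

section
/- In the super setting, assume: (i) the pair (d⁺, d⁻) is a Fredholm pair; (ii) ker(F⁻∘F⁺) and ker(F⁺∘F⁻) are finite-dimensional; (iii) V⁰ = ker(F⁻∘F⁺) ⊕ im(F⁻∘F⁺) and V¹ = ker(F⁺∘F⁻) ⊕ im(F⁺∘F⁻). Then (F⁺, F⁻) is a Fredholm pair and ind(F⁺, F⁻) = ind(d⁺, d⁻). -/
/-!
Write `L₀ = F⁻F⁺` and `L₁ = F⁺F⁻`. For any pair `(S, T)` one has `ker S ⊆ ker TS` and
`ker S ∩ im T = T (ker ST)`, so rank–nullity on the finite-dimensional kernels gives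
`ind(F⁺, F⁻) = dim ker L₀ - dim ker L₁`. The maps `d±` intertwine `L₀` and `L₁`, hence respect
the decompositions `Vⁱ = ker Lᵢ ⊕ im Lᵢ`, and on `ker d⁺` one has `L₀ = d⁻∂⁺`. Therefore every
`d⁺`-cycle is congruent modulo `im d⁻` to one in `ker L₀`, and the `d⁺`-cycles in `ker L₀` that are
boundaries are exactly `d⁻ (ker L₁)`; the same computation then gives
`ind(d⁺, d⁻) = dim ker L₀ - dim ker L₁`.
-/

open LinearMap Module

namespace Submodule

variable {K V W : Type*} [DivisionRing K] [AddCommGroup V] [Module K V] [AddCommGroup W]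
  [Module K W]

theorem finrank_comap_subtype (p q : Submodule K V) :
    finrank K (q.comap p.subtype) = finrank K (p ⊓ q : Submodule K V) := by
  rw [← finrank_map_subtype_eq, map_comap_subtype]

theorem finrank_map_add_finrank_inf_ker (f : V →ₗ[K] W) (p : Submodule K V)
    [FiniteDimensional K p] :
    finrank K (p.map f) + finrank K (ker f ⊓ p : Submodule K V) = finrank K p := by
  rw [← range_domRestrict, inf_comm, ← finrank_comap_subtype, ← ker_domRestrict]
  exact finrank_range_add_finrank_ker _

variable {R M : Type*} [Ring R] [AddCommGroup M] [Module R M]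

noncomputable def quotientComapSubtypeEquivOfLeSup {p q r : Submodule R M} (hpq : p ≤ q)
    (hq : q ≤ p ⊔ r) : (p ⧸ r.comap p.subtype) ≃ₗ[R] q ⧸ r.comap q.subtype :=
  let φ := (r.comap q.subtype).mkQ ∘ₗ inclusion hpq
  have hφ : Function.Surjective φ := by
    rintro ⟨x, hx⟩
    obtain ⟨a, ha, b, hb, rfl⟩ := mem_sup.mp (hq hx)
    refine ⟨⟨a, ha⟩, (Quotient.eq _).mpr ?_⟩
    simpa using neg_mem hb
  have hker : ker φ = r.comap p.subtype := by
    rw [ker_comp, ker_mkQ, ← comap_comp, subtype_comp_inclusion]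
  (quotEquivOfEq _ _ hker.symm).trans (φ.quotKerEquivOfSurjective hφ)

end Submodule

namespace LinearMap

variable {R M N : Type*} [Ring R] [AddCommGroup M] [Module R M] [AddCommGroup N] [Module R N]
  {f : M →ₗ[R] N} {P : Module.End R M} {Q : Module.End R N}

theorem ker_le_comap_ker_of_comp_eq (h : f ∘ₗ P = Q ∘ₗ f) : ker P ≤ (ker Q).comap f :=
  fun x hx => by rw [Submodule.mem_comap, mem_ker, ← comp_apply, ← h, comp_apply, mem_ker.mp hx,
    map_zero]

theorem range_le_comap_range_of_comp_eq (h : f ∘ₗ P = Q ∘ₗ f) : range P ≤ (range Q).comap f := by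
  rintro _ ⟨x, rfl⟩
  exact ⟨f x, by rw [← comp_apply, ← h, comp_apply]⟩

theorem comap_ker_le_ker_sup_range_inf_ker (h : f ∘ₗ P = Q ∘ₗ f) (hP : ker P ⊔ range P = ⊤)
    (hQ : Disjoint (ker Q) (range Q)) : (ker Q).comap f ≤ ker P ⊔ range P ⊓ ker f := by
  intro x hx
  obtain ⟨a, ha, b, hb, rfl⟩ := Submodule.mem_sup.mp (hP ▸ Submodule.mem_top : x ∈ ker P ⊔ range P)
  have hfb : f b ∈ ker Q := by simpa using (ker Q).sub_mem hx (ker_le_comap_ker_of_comp_eq h ha)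
  exact Submodule.mem_sup.mpr
    ⟨a, ha, b, ⟨hb, Submodule.disjoint_def.mp hQ _ hfb (range_le_comap_range_of_comp_eq h hb)⟩, rfl⟩

end LinearMap

section FredholmPair

variable {R : Type*} [Ring R] {X Y : Type*} [AddCommGroup X] [AddCommGroup Y]

/-- `(X', Y')` carries `ker S / (ker S ∩ im T)`, which is then isomorphic to
`(ker S ∩ X') / T Y'`. -/
structure CarriesKerQuot [Module R X] [Module R Y] (S : X →ₗ[R] Y) (T : Y →ₗ[R] X)
    (X' : Submodule R X) (Y' : Submodule R Y) : Prop where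
  le_sup : ker S ≤ ker S ⊓ X' ⊔ range T
  inf_range_eq : ker S ⊓ X' ⊓ range T = Y'.map T

theorem CarriesKerQuot.ker_comp [Module R X] [Module R Y] (S : X →ₗ[R] Y) (T : Y →ₗ[R] X) :
    CarriesKerQuot S T (ker (T ∘ₗ S)) (ker (S ∘ₗ T)) where
  le_sup := le_sup_of_le_left (le_inf le_rfl (ker_le_ker_comp S T))
  inf_range_eq := by
    ext x
    simp only [Submodule.mem_inf, mem_ker, mem_range, Submodule.mem_map, comp_apply]
    constructor
    · rintro ⟨⟨hSx, -⟩, y, rfl⟩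
      exact ⟨y, hSx, rfl⟩
    · rintro ⟨y, hy, rfl⟩
      exact ⟨⟨hy, by rw [hy, map_zero]⟩, y, rfl⟩

namespace CarriesKerQuot

variable [Module ℂ X] [Module ℂ Y] {S : X →ₗ[ℂ] Y} {T : Y →ₗ[ℂ] X} {X' : Submodule ℂ X}
  {Y' : Submodule ℂ Y}

noncomputable def kerQuotEquiv (h : CarriesKerQuot S T X' Y') :
    (↥(ker S ⊓ X') ⧸ (range T).comap (ker S ⊓ X').subtype) ≃ₗ[ℂ] fredholmKerQuot S T :=
  Submodule.quotientComapSubtypeEquivOfLeSup inf_le_left h.le_sup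

theorem finiteDimensional [FiniteDimensional ℂ X'] (h : CarriesKerQuot S T X' Y') :
    FiniteDimensional ℂ (fredholmKerQuot S T) :=
  h.kerQuotEquiv.finiteDimensional

theorem finrank_add_finrank_map [FiniteDimensional ℂ X'] (h : CarriesKerQuot S T X' Y') :
    finrank ℂ (fredholmKerQuot S T) + finrank ℂ (Y'.map T) =
      finrank ℂ (ker S ⊓ X' : Submodule ℂ X) := by
  rw [← h.kerQuotEquiv.finrank_eq, ← h.inf_range_eq, ← Submodule.finrank_comap_subtype]
  exact Submodule.finrank_quotient_add_finrank _

variable [FiniteDimensional ℂ X'] [FiniteDimensional ℂ Y']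

theorem isFredholmPair (hST : CarriesKerQuot S T X' Y') (hTS : CarriesKerQuot T S Y' X') :
    IsFredholmPair S T :=
  ⟨hST.finiteDimensional, hTS.finiteDimensional⟩

theorem fredholmIndex_eq (hST : CarriesKerQuot S T X' Y') (hTS : CarriesKerQuot T S Y' X') :
    fredholmIndex S T = finrank ℂ X' - finrank ℂ Y' := by
  have := hST.finrank_add_finrank_map
  have := hTS.finrank_add_finrank_map
  have := Submodule.finrank_map_add_finrank_inf_ker S X'
  have := Submodule.finrank_map_add_finrank_inf_ker T Y'
  unfold fredholmIndex
  omega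

end CarriesKerQuot

section Hodge

variable [Module R X] [Module R Y] {S : X →ₗ[R] Y} {T : Y →ₗ[R] X} {P : Module.End R X}
  {Q : Module.End R Y}

theorem range_inf_ker_le_range (hSP : S ∘ₗ P = Q ∘ₗ S) (hP : ker P ⊔ range P = ⊤)
    (hQ : Disjoint (ker Q) (range Q)) (hPS : (ker S).map P ≤ range T) :
    range P ⊓ ker S ≤ range T := by
  rintro _ ⟨⟨v, rfl⟩, hv⟩
  have hSv : v ∈ (ker Q).comap S := by
    rw [Submodule.mem_comap, mem_ker, ← comp_apply, ← hSP, comp_apply]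
    exact hv
  obtain ⟨a, ha, b, ⟨-, hb⟩, rfl⟩ := Submodule.mem_sup.mp <|
    comap_ker_le_ker_sup_range_inf_ker hSP hP hQ hSv
  rw [map_add, mem_ker.mp ha, zero_add]
  exact hPS ⟨b, hb, rfl⟩

theorem CarriesKerQuot.of_isCompl (hSP : S ∘ₗ P = Q ∘ₗ S) (hTQ : T ∘ₗ Q = P ∘ₗ T)
    (hST : S ∘ₗ T = 0) (hP : IsCompl (ker P) (range P)) (hQ : IsCompl (ker Q) (range Q))
    (hPS : (ker S).map P ≤ range T) : CarriesKerQuot S T (ker P) (ker Q) where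
  le_sup := by
    intro x hx
    obtain ⟨a, ha, b, ⟨hbP, hbS⟩, rfl⟩ := Submodule.mem_sup.mp <|
      comap_ker_le_ker_sup_range_inf_ker hSP hP.sup_eq_top hQ.disjoint
        (by simp [mem_ker.mp hx] : x ∈ (ker Q).comap S)
    have haS : a ∈ ker S := by simpa [mem_ker.mp hbS] using hx
    exact Submodule.add_mem_sup ⟨haS, ha⟩
      (range_inf_ker_le_range hSP hP.sup_eq_top hQ.disjoint hPS ⟨hbP, hbS⟩)
  inf_range_eq := by
    apply le_antisymm
    · rintro _ ⟨⟨-, hy⟩, y, rfl⟩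
      obtain ⟨a, ha, b, ⟨-, hb⟩, rfl⟩ := Submodule.mem_sup.mp <|
        comap_ker_le_ker_sup_range_inf_ker hTQ hQ.sup_eq_top hP.disjoint hy
      exact ⟨a, ha, by rw [map_add, mem_ker.mp hb, add_zero]⟩
    · rintro _ ⟨y, hy, rfl⟩
      exact ⟨⟨by simp [← comp_apply, hST], ker_le_comap_ker_of_comp_eq hTQ hy⟩, y, rfl⟩

end Hodge

end FredholmPair

section SuperSetting

variable {V₀ V₁ : Type*} [AddCommGroup V₀] [Module ℂ V₀] [AddCommGroup V₁] [Module ℂ V₁]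
  {dp δp : V₀ →ₗ[ℂ] V₁} {dm δm : V₁ →ₗ[ℂ] V₀}

-- Both sides equal `d⁺ ∂⁻ d⁺`.
theorem comp_laplacian_eq (hd₁ : dm ∘ₗ dp = 0) (hd₂ : dp ∘ₗ dm = 0)
    (hδ₁ : δm ∘ₗ δp = 0) (hδ₂ : δp ∘ₗ δm = 0) :
    dp ∘ₗ ((dm + δm) ∘ₗ (dp + δp)) = ((dp + δp) ∘ₗ (dm + δm)) ∘ₗ dp := by
  simp only [comp_add, add_comp, ← comp_assoc, hd₁, hd₂, hδ₁, hδ₂]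
  simp only [comp_assoc, hd₁, comp_zero, zero_comp, add_zero, zero_add]

theorem map_laplacian_ker_le_range (hδ₁ : δm ∘ₗ δp = 0) :
    (ker dp).map ((dm + δm) ∘ₗ (dp + δp)) ≤ range dm := by
  rintro _ ⟨x, hx, rfl⟩
  have hδx : δm (δp x) = 0 := by rw [← comp_apply, hδ₁, LinearMap.zero_apply]
  exact ⟨δp x, by simp [mem_ker.mp hx, hδx]⟩

end SuperSetting

theorem fredholmIndex_super_eq_index_d_general {V₀ V₁ : Type*}
    [AddCommGroup V₀] [Module ℂ V₀] [AddCommGroup V₁] [Module ℂ V₁]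
    (dp δp : V₀ →ₗ[ℂ] V₁) (dm δm : V₁ →ₗ[ℂ] V₀)
    (hd₁ : dm ∘ₗ dp = 0) (hd₂ : dp ∘ₗ dm = 0)
    (hδ₁ : δm ∘ₗ δp = 0) (hδ₂ : δp ∘ₗ δm = 0)
    (hker₀ : FiniteDimensional ℂ (LinearMap.ker ((dm + δm) ∘ₗ (dp + δp))))
    (hker₁ : FiniteDimensional ℂ (LinearMap.ker ((dp + δp) ∘ₗ (dm + δm))))
    (hcompl₀ : IsCompl (LinearMap.ker ((dm + δm) ∘ₗ (dp + δp)))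
      (LinearMap.range ((dm + δm) ∘ₗ (dp + δp))))
    (hcompl₁ : IsCompl (LinearMap.ker ((dp + δp) ∘ₗ (dm + δm)))
      (LinearMap.range ((dp + δp) ∘ₗ (dm + δm)))) :
    IsFredholmPair (dp + δp) (dm + δm) ∧
    fredholmIndex (dp + δp) (dm + δm) = fredholmIndex dp dm := by
  have hF := CarriesKerQuot.ker_comp (dp + δp) (dm + δm)
  have hF' := CarriesKerQuot.ker_comp (dm + δm) (dp + δp)
  have hd := CarriesKerQuot.of_isCompl (comp_laplacian_eq hd₁ hd₂ hδ₁ hδ₂)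
    (comp_laplacian_eq hd₂ hd₁ hδ₂ hδ₁) hd₂ hcompl₀ hcompl₁ (map_laplacian_ker_le_range hδ₁)
  have hd' := CarriesKerQuot.of_isCompl (comp_laplacian_eq hd₂ hd₁ hδ₂ hδ₁)
    (comp_laplacian_eq hd₁ hd₂ hδ₁ hδ₂) hd₁ hcompl₁ hcompl₀ (map_laplacian_ker_le_range hδ₂)
  exact ⟨hF.isFredholmPair hF', (hF.fredholmIndex_eq hF').trans (hd.fredholmIndex_eq hd').symm⟩

/-- in the super setting (`F⁺ = d⁺ + ∂⁺`, `F⁻ = d⁻ + ∂⁻`), if `(d⁺, d⁻)` is a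
Fredholm pair, `ker(F⁻∘F⁺)` and `ker(F⁺∘F⁻)` are finite dimensional, and
`V⁰ = ker(F⁻∘F⁺) ⊕ im(F⁻∘F⁺)`, `V¹ = ker(F⁺∘F⁻) ⊕ im(F⁺∘F⁻)`, then `(F⁺, F⁻)` is a
Fredholm pair and `ind(F⁺,F⁻) = ind(d⁺,d⁻)`. -/
theorem fredholmIndex_super_eq_index_d {V₀ V₁ : Type*}
    [AddCommGroup V₀] [Module ℂ V₀] [AddCommGroup V₁] [Module ℂ V₁]
    (dp δp : V₀ →ₗ[ℂ] V₁) (dm δm : V₁ →ₗ[ℂ] V₀)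
    (hd₁ : dm ∘ₗ dp = 0) (hd₂ : dp ∘ₗ dm = 0)
    (hδ₁ : δm ∘ₗ δp = 0) (hδ₂ : δp ∘ₗ δm = 0)
    (hFredd : IsFredholmPair dp dm)
    (hker₀ : FiniteDimensional ℂ (LinearMap.ker ((dm + δm) ∘ₗ (dp + δp))))
    (hker₁ : FiniteDimensional ℂ (LinearMap.ker ((dp + δp) ∘ₗ (dm + δm))))
    (hcompl₀ : IsCompl (LinearMap.ker ((dm + δm) ∘ₗ (dp + δp)))
      (LinearMap.range ((dm + δm) ∘ₗ (dp + δp))))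
    (hcompl₁ : IsCompl (LinearMap.ker ((dp + δp) ∘ₗ (dm + δm)))
      (LinearMap.range ((dp + δp) ∘ₗ (dm + δm)))) :
    IsFredholmPair (dp + δp) (dm + δm) ∧
    fredholmIndex (dp + δp) (dm + δm) = fredholmIndex dp dm :=
  fredholmIndex_super_eq_index_d_general dp δp dm δm hd₁ hd₂ hδ₁ hδ₂ hker₀ hker₁ hcompl₀ hcompl₁
end
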